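/- Mutation changes the colour of diameters: if D is a non-crossing diagram of Dynkin type D_n, (a,b) is a coloured diameter in nc D \ D, and μ_D^-((a,b)) (respectively μ_D((a,b))) is again a diameter, then it has the opposite colour to (a,b). -/

import Mathlib

open scoped Classical

namespace DynkinD

/-- Vertices of the regular `2n`-gon, labelled by `ZMod (2*n)`. -/
abbrev Vtx (n : ℕ) := ZMod (2 * n)

/-- The element `n` of `ZMod (2*n)`, i.e. rotation by π. -/
def dN (n : ℕ) : Vtx n := (n : ZMod (2 * n))

/-- `x` lies strictly between `a` and `b` in anticlockwise order. -/
def btw (n : ℕ) (a x b : Vtx n) : Prop :=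
  0 < (x - a).val ∧ (x - a).val < (b - a).val

/-- The arcs `(i,j)` and `(k,l)` cross: the four vertices are pairwise distinct and
appear in anticlockwise cyclic order `i,k,j,l` or `k,i,l,j`. -/
def crosses (n : ℕ) (i j k l : Vtx n) : Prop :=
  (i ≠ j ∧ i ≠ k ∧ i ≠ l ∧ j ≠ k ∧ j ≠ l ∧ k ≠ l) ∧
  ((btw n i k j ∧ btw n j l i) ∨ (btw n k i l ∧ btw n l j k))

/-- Elements of the combinatorial model: pairs of arcs, coloured diameters,
and coloured pairs of radii (through the centre). -/
inductive RElt (n : ℕ) where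
  | pairArc (i j : Vtx n)
  | diam (i : Vtx n) (c : Bool)
  | radii (i : Vtx n) (c : Bool)

def isRadii {n : ℕ} : RElt n → Prop
  | .radii _ _ => True
  | _ => False

/-- Crossing of elements (colour-aware: diameters of the same colour never cross;
a pair of radii crosses another element iff the corresponding diameter does;
two pairs of radii never cross). -/
def crossElt (n : ℕ) : RElt n → RElt n → Prop
  | .pairArc i j, .pairArc k l => crosses n i j k l ∨ crosses n i j (k + dN n) (l + dN n)
  | .pairArc i j, .diam k _ => crosses n i j k (k + dN n)
  | .diam k _, .pairArc i j => crosses n i j k (k + dN n)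
  | .diam i c, .diam j c' => c ≠ c' ∧ crosses n i (i + dN n) j (j + dN n)
  | .radii i _, .pairArc k l => crosses n k l i (i + dN n)
  | .pairArc k l, .radii i _ => crosses n k l i (i + dN n)
  | .radii i c, .diam j c' => c ≠ c' ∧ crosses n i (i + dN n) j (j + dN n)
  | .diam j c', .radii i c => c ≠ c' ∧ crosses n i (i + dN n) j (j + dN n)
  | .radii _ _, .radii _ _ => False

/-- Crossing exactly once. -/
def crossOnceElt (n : ℕ) : RElt n → RElt n → Prop
  | .pairArc i j, .pairArc k l => Xor' (crosses n i j k l) (crosses n i j (k + dN n) (l + dN n))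
  | x, y => crossElt n x y

/-- Plain (colour-blind) geometric crossing of the underlying segments. -/
def geomCross (n : ℕ) : RElt n → RElt n → Prop
  | .pairArc i j, .pairArc k l => crosses n i j k l ∨ crosses n i j (k + dN n) (l + dN n)
  | .pairArc i j, .diam k _ => crosses n i j k (k + dN n)
  | .diam k _, .pairArc i j => crosses n i j k (k + dN n)
  | .diam i _, .diam j _ => crosses n i (i + dN n) j (j + dN n)
  | .radii i _, .pairArc k l => crosses n k l i (i + dN n)
  | .pairArc k l, .radii i _ => crosses n k l i (i + dN n)
  | .radii i _, .diam j _ => crosses n i (i + dN n) j (j + dN n)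
  | .diam j _, .radii i _ => crosses n i (i + dN n) j (j + dN n)
  | .radii _ _, .radii _ _ => False

/-- Identification of representatives of one pair of arcs / coloured diameter / pair of radii. -/
def symEq (n : ℕ) : RElt n → RElt n → Prop
  | .pairArc i j, .pairArc k l =>
      (k = i ∧ l = j) ∨ (k = j ∧ l = i) ∨
      (k = i + dN n ∧ l = j + dN n) ∨ (k = j + dN n ∧ l = i + dN n)
  | .diam i c, .diam j c' => c = c' ∧ (j = i ∨ j = i + dN n)
  | .radii i c, .radii j c' => c = c' ∧ (j = i ∨ j = i + dN n)
  | _, _ => False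

/-- Elements allowed in a diagram of Dynkin type `D_n`: no radii, and pairs of
arcs must be internal non-diameter arcs (no edges, no degenerate arcs). -/
def IsProper {n : ℕ} : RElt n → Prop
  | .pairArc i j => i ≠ j ∧ j ≠ i + dN n ∧ j ≠ i + 1 ∧ i ≠ j + 1
  | .diam _ _ => True
  | .radii _ _ => False

/-- Closure under the symmetries identifying representatives. -/
def SymClosed {n : ℕ} (D : Set (RElt n)) : Prop :=
  (∀ i j, RElt.pairArc i j ∈ D →
    RElt.pairArc j i ∈ D ∧ RElt.pairArc (i + dN n) (j + dN n) ∈ D) ∧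
  (∀ i c, RElt.diam i c ∈ D → RElt.diam (i + dN n) c ∈ D)

/-- A diagram of Dynkin type `D_n`. -/
def IsDiagram {n : ℕ} (D : Set (RElt n)) : Prop :=
  (∀ e ∈ D, IsProper e) ∧ SymClosed D

/-- A non-crossing collection. -/
def NonCrossing {n : ℕ} (D : Set (RElt n)) : Prop :=
  ∀ e ∈ D, ∀ f ∈ D, ¬ crossElt n e f

/-- `nc D` : the elements of `A(P_{2n})` crossing no element of `D`. -/
def ncD (n : ℕ) (D : Set (RElt n)) : Set (RElt n) :=
  {e | IsProper e ∧ ∀ f ∈ D, ¬ crossElt n e f}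

def HasDiam {n : ℕ} (D : Set (RElt n)) : Prop := ∃ i c, RElt.diam i c ∈ D

/-- The replacement map `r_D`: the identity if `D` has no diameters; otherwise it
replaces a coloured diameter by the correspondingly coloured pair of radii, unless
the oppositely coloured diameter with the same endpoints also lies in `D`. -/
noncomputable def rD {n : ℕ} (D : Set (RElt n)) (x : RElt n) : RElt n :=
  if ¬ HasDiam D then x
  else match x with
    | .diam i c =>
        if RElt.diam i (!c) ∈ D ∨ RElt.diam (i + dN n) (!c) ∈ D then .diam i c
        else .radii i c
    | y => y

/-- Vertices of the `2n`-gon together with the central vertex `c` (`none`). -/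
abbrev V (n : ℕ) := Option (Vtx n)

/-- Rotation by π (fixing the centre). -/
def rot (n : ℕ) : V n → V n := Option.map (· + dN n)

/-- Position of a vertex in the plane (the centre at the origin). -/
noncomputable def pos (n : ℕ) : V n → ℂ
  | none => 0
  | some k => Complex.exp (2 * Real.pi * Complex.I * (k.val : ℂ) / (2 * n))

/-- The clockwise angle `∠(x,y,z) ∈ [0,2π)` covered when rotating the segment
`(x,y)` to the segment `(y,z)` clockwise about `y`. -/
noncomputable def ang (n : ℕ) (x y z : V n) : ℝ :=
  let a := Complex.arg ((pos n x - pos n y) / (pos n z - pos n y))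
  if 0 ≤ a then a else a + 2 * Real.pi

/-- The unordered segments underlying an element (both π-rotated copies). -/
def segs (n : ℕ) : RElt n → Set (Sym2 (V n))
  | .pairArc i j => {s(some i, some j), s(some (i + dN n), some (j + dN n))}
  | .diam i _ => {s(some i, some (i + dN n))}
  | .radii i _ => {s(some i, none), s(some (i + dN n), none)}

/-- A `D`-cell of Dynkin type `D_n`: a polygon `⟨d_1,…,d_k⟩`, `k ≥ 3`, with
pairwise distinct vertices in `{0,…,2n-1} ∪ {c}`, whose sides underlie elements
of `r_D(D)` or edges of the `2n`-gon, satisfying the angle-minimality condition. -/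
structure Cell (n : ℕ) (D : Set (RElt n)) where
  k : ℕ
  hk : 3 ≤ k
  d : ZMod k → V n
  inj : Function.Injective d
  sides : ∀ i : ZMod k,
    (∃ e ∈ D, s(d i, d (i + 1)) ∈ segs n (rD D e)) ∨
    (∃ j : Vtx n, s(d i, d (i + 1)) = s(some j, some (j + 1)))
  minAngle : ∀ (i : ZMod k) (v : V n), (∃ e ∈ D, s(d i, v) ∈ segs n (rD D e)) →
    0 < ang n (d (i - 1)) (d i) v →
    0 < ang n (d (i - 1)) (d i) (d (i + 1)) ∧
      ang n (d (i - 1)) (d i) (d (i + 1)) ≤ ang n (d (i - 1)) (d i) v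

/-- `e` is contained in (the pair of `D`-cells of) `C`: `r_D(e)` is a diagonal. -/
def containedIn {n : ℕ} {D : Set (RElt n)} (C : Cell n D) (e : RElt n) : Prop :=
  ∃ i j : ZMod C.k, j ≠ i - 1 ∧ j ≠ i ∧ j ≠ i + 1 ∧ s(C.d i, C.d j) ∈ segs n (rD D e)

/-- Two cells determine the same pair of `D`-cells. -/
def SamePair {n : ℕ} {D : Set (RElt n)} (C C' : Cell n D) : Prop :=
  Set.range C'.d = Set.range C.d ∨ Set.range C'.d = rot n '' Set.range C.d

/-- A π-rotation-invariant cell. -/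
def RotInv {n : ℕ} {D : Set (RElt n)} (C : Cell n D) : Prop :=
  Set.range C.d = rot n '' Set.range C.d

/-- The segment from `u` to `v` is a diameter. -/
def isDiamSeg (n : ℕ) (u v : V n) : Prop := ∃ a : Vtx n, u = some a ∧ v = some (a + dN n)

/-- The colour rules for mutation: whenever the mutated element `e'` is a coloured
diameter, its colour is prescribed according to the diameters of `D`. -/
def colourRule (n : ℕ) (D : Set (RElt n)) (e e' : RElt n) : Prop :=
  ∀ (i : Vtx n) (c' : Bool), e' = RElt.diam i c' →
    ((¬ HasDiam D → ∃ j c, e = RElt.diam j c ∧ c' = !c) ∧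
     ((∃ x y cx cy, RElt.diam x cx ∈ D ∧ RElt.diam y cy ∈ D ∧ y ≠ x ∧ y ≠ x + dN n) →
        ∀ cγ : Bool, (∃ z, RElt.diam z cγ ∈ D) → c' = cγ) ∧
     (∀ (x : Vtx n) (cγ : Bool), RElt.diam x cγ ∈ D →
        (∀ z cz, RElt.diam z cz ∈ D → (z = x ∨ z = x + dN n) ∧ cz = cγ) →
        (c' = !cγ ↔ (i = x ∨ i = x + dN n))))

/-- The mutation `μ_D` as a relation: `D` is fixed pointwise, and an element not in `D`,
contained in a pair of `D`-cells with `r_D`-image the diagonal `(d_i,d_j)`, is sent to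
the element with `r_D`-image `(d_{i+1},d_{j+1})`, colours as prescribed. -/
def MutStep (n : ℕ) (D : Set (RElt n)) (e e' : RElt n) : Prop :=
  (e ∈ D ∧ e' = e) ∨
  (e ∉ D ∧ ¬ isRadii e' ∧ ∃ (C : Cell n D) (i j : ZMod C.k),
    j ≠ i - 1 ∧ j ≠ i ∧ j ≠ i + 1 ∧
    s(C.d i, C.d j) ∈ segs n (rD D e) ∧
    s(C.d (i + 1), C.d (j + 1)) ∈ segs n (rD D e') ∧
    colourRule n D e e')

/-- The mutation `μ_D^-` as a relation (rotating diagonals clockwise). -/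
def MutStepInv (n : ℕ) (D : Set (RElt n)) (e e' : RElt n) : Prop :=
  (e ∈ D ∧ e' = e) ∨
  (e ∉ D ∧ ¬ isRadii e' ∧ ∃ (C : Cell n D) (i j : ZMod C.k),
    j ≠ i - 1 ∧ j ≠ i ∧ j ≠ i + 1 ∧
    s(C.d i, C.d j) ∈ segs n (rD D e) ∧
    s(C.d (i - 1), C.d (j - 1)) ∈ segs n (rD D e') ∧
    colourRule n D e e')

end DynkinD


/-!
If the mutated diameter `(a', c')` sat at the position of `(a, c)`, then `r_D` of both would
share a vertex (an endpoint of the diameter, or the centre), which mutation forbids. So `a'` lies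
elsewhere, and the colour rules settle `c'`; without diameters in `D` the first rule is the claim.
Diameters of `D` away from `a` have colour `c`, since
`(a, c) ∈ nc D`, and those at `a` have colour `!c`, since `(a, c) ∉ D`. If some diameter of `D`
lies away from `a`, then `r_D` sends `(a, c)` to a pair of radii; `r_D(a', c')` avoids the
centre, so `(a', !c')` lies in `D` and has colour `c`. Otherwise every diameter of `D` sits at `a`
with colour `!c`, and the third colour rule gives `c' = !c` because `a'` is elsewhere.
-/

namespace DynkinD

variable {n : ℕ}

lemma dN_add_dN : dN n + dN n = 0 := by
  rw [dN, ← Nat.cast_add, ← two_mul, ZMod.natCast_self]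

@[simp]
lemma add_dN_add_dN (x : Vtx n) : x + dN n + dN n = x := by
  rw [add_assoc, dN_add_dN, add_zero]

lemma neg_dN : -dN n = dN n := neg_eq_of_add_eq_zero_left dN_add_dN

lemma val_dN (hn : 0 < n) : (dN n).val = n := by
  have : NeZero (2 * n) := ⟨by omega⟩
  exact ZMod.val_natCast_of_lt (by omega)

lemma self_ne_add_dN (hn : 0 < n) (x : Vtx n) : x ≠ x + dN n := by
  intro h
  have := val_dN hn
  rw [left_eq_add.mp h, ZMod.val_zero] at this
  omega

lemma crosses_diam_of_ne (hn : 0 < n) {a b : Vtx n} (h1 : b ≠ a) (h2 : b ≠ a + dN n) :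
    crosses n a (a + dN n) b (b + dN n) := by
  have : NeZero (2 * n) := ⟨by omega⟩
  have : NeZero (b - a) := ⟨sub_ne_zero.mpr h1⟩
  have hval := val_dN hn
  have ht0 : 0 < (b - a).val := Nat.pos_of_ne_zero (by simpa using NeZero.ne (b - a))
  have htlt : (b - a).val < 2 * n := ZMod.val_lt _
  have htn : (b - a).val ≠ n := fun h =>
    h2 (by rw [← sub_add_cancel b a, ZMod.val_injective _ (h.trans hval.symm), add_comm])
  refine ⟨⟨self_ne_add_dN hn a, h1.symm, fun h => h2 (by simp [h]), Ne.symm h2,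
    fun h => h1 (add_right_cancel h).symm, self_ne_add_dN hn b⟩, ?_⟩
  simp only [btw, show a + dN n - a = dN n by ring, show b + dN n - (a + dN n) = b - a by ring,
    show a - (a + dN n) = -dN n by ring, show a - b = -(b - a) by ring,
    show b + dN n - b = dN n by ring, show a + dN n - (b + dN n) = -(b - a) by ring,
    show b - (b + dN n) = -dN n by ring, neg_dN, hval, ZMod.val_neg_of_ne_zero]
  omega

lemma SymClosed.diam_mem_of_add_dN {D : Set (RElt n)} (hD : SymClosed D) {i : Vtx n}
    {c : Bool} (h : RElt.diam (i + dN n) c ∈ D) : RElt.diam i c ∈ D := by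
  simpa using hD.2 _ _ h

lemma SymClosed.diam_mem_of_eq_or_eq_add_dN {D : Set (RElt n)} (hD : SymClosed D) {i j : Vtx n}
    {c : Bool} (hj : j = i ∨ j = i + dN n) (h : RElt.diam j c ∈ D) : RElt.diam i c ∈ D := by
  rcases hj with rfl | rfl
  exacts [h, hD.diam_mem_of_add_dN h]

lemma SymClosed.rD_diam_eq_radii {D : Set (RElt n)} (hD : SymClosed D) (hHas : HasDiam D)
    {i : Vtx n} {c : Bool} (h : RElt.diam i (!c) ∉ D) : rD D (RElt.diam i c) = RElt.radii i c := by
  have h' : RElt.diam (i + dN n) (!c) ∉ D := fun h' => h (hD.diam_mem_of_add_dN h')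
  simp [rD, hHas, h, h']

lemma none_mem_of_mem_segs_radii {t : Sym2 (V n)} {i : Vtx n} {c : Bool}
    (ht : t ∈ segs n (RElt.radii i c)) : none ∈ t := by
  rcases ht with rfl | rfl <;> simp

lemma mem_segs_rD_diam {D : Set (RElt n)} {i : Vtx n} {c : Bool} {s : Sym2 (V n)}
    (hs : s ∈ segs n (rD D (RElt.diam i c))) :
    s = s(some i, some (i + dN n)) ∨ s = s(some i, none) ∨ s = s(some (i + dN n), none) := by
  simp only [rD] at hs
  split_ifs at hs <;> simp_all [segs]

lemma exists_mem_segs_rD_diam_of_eq_or {D : Set (RElt n)} {i j : Vtx n} {c c' : Bool}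
    (hj : j = i ∨ j = i + dN n) {s t : Sym2 (V n)} (hs : s ∈ segs n (rD D (RElt.diam i c)))
    (ht : t ∈ segs n (rD D (RElt.diam j c'))) : ∃ x, x ∈ s ∧ x ∈ t := by
  rcases hj with rfl | rfl <;>
    rcases mem_segs_rD_diam hs with rfl | rfl | rfl <;>
    rcases mem_segs_rD_diam ht with rfl | rfl | rfl <;> simp

lemma Cell.not_mem_of_mem_succ_diagonal {D : Set (RElt n)} (C : Cell n D) {i j : ZMod C.k}
    (h1 : j ≠ i - 1) (h2 : j ≠ i + 1) :
    ∀ x ∈ s(C.d i, C.d j), x ∉ s(C.d (i + 1), C.d (j + 1)) := by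
  have : Fact (1 < C.k) := ⟨by have := C.hk; omega⟩
  simp only [Sym2.mem_iff]
  rintro x (rfl | rfl) (h | h) <;> have h := C.inj h
  · exact one_ne_zero (left_eq_add.mp h)
  · exact h1 (eq_sub_of_add_eq h.symm)
  · exact h2 h
  · exact one_ne_zero (left_eq_add.mp h)

lemma exists_disjoint_segs_of_mut {D : Set (RElt n)} {e e' : RElt n} (he : e ∉ D)
    (h : MutStep n D e e' ∨ MutStepInv n D e e') :
    colourRule n D e e' ∧
      ∃ s ∈ segs n (rD D e), ∃ t ∈ segs n (rD D e'), ∀ x ∈ s, x ∉ t := by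
  rcases h with (⟨hin, -⟩ | ⟨-, -, C, i, j, h1, -, h2, hs, hs', hcol⟩) |
    (⟨hin, -⟩ | ⟨-, -, C, i, j, h1, -, h2, hs, hs', hcol⟩)
  · exact absurd hin he
  · exact ⟨hcol, _, hs, _, hs', C.not_mem_of_mem_succ_diagonal h1 h2⟩
  · exact absurd hin he
  · refine ⟨hcol, _, hs, _, hs', fun x hx hx' => ?_⟩
    have key := C.not_mem_of_mem_succ_diagonal (i := i - 1) (j := j - 1)
      (fun h => h1 (by linear_combination h)) (fun h => h2 (by linear_combination h))
    simp only [sub_add_cancel] at key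
    exact key x hx' hx

section Colour

variable {D : Set (RElt n)} {a z : Vtx n} {c cz : Bool}

lemma colour_eq_of_mem_ncD (hn : 0 < n) (hmem : RElt.diam a c ∈ ncD n D)
    (hz : RElt.diam z cz ∈ D) (h1 : z ≠ a) (h2 : z ≠ a + dN n) : cz = c := by
  by_contra hne
  exact hmem.2 _ hz ⟨Ne.symm hne, crosses_diam_of_ne hn h1 h2⟩

lemma colour_eq_not_of_not_mem (hD : SymClosed D) (hnot : RElt.diam a c ∉ D)
    (hz : RElt.diam z cz ∈ D) (hza : z = a ∨ z = a + dN n) : cz = !c :=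
  Bool.eq_not_iff.mpr fun h => hnot (h ▸ hD.diam_mem_of_eq_or_eq_add_dN hza hz)

variable {a' : Vtx n} {c' : Bool}

lemma colour_eq_not_of_diam_mem_away (hn : 0 < n) (hD : SymClosed D) (hnc : NonCrossing D)
    (hmem : RElt.diam a c ∈ ncD n D) (hz : RElt.diam z cz ∈ D) (hz1 : z ≠ a)
    (hz2 : z ≠ a + dN n) (ha' : a' ≠ a ∧ a' ≠ a + dN n) {s t : Sym2 (V n)}
    (hs : s ∈ segs n (rD D (RElt.diam a c))) (ht : t ∈ segs n (rD D (RElt.diam a' c')))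
    (hst : ∀ x ∈ s, x ∉ t) : c' = !c := by
  obtain rfl := colour_eq_of_mem_ncD hn hmem hz hz1 hz2
  have hna : RElt.diam a (!cz) ∉ D := fun h =>
    hnc _ h _ hz ⟨by simp, crosses_diam_of_ne hn hz1 hz2⟩
  rw [hD.rD_diam_eq_radii ⟨z, cz, hz⟩ hna] at hs
  have ha'D : RElt.diam a' (!c') ∈ D := by
    by_contra h
    rw [hD.rD_diam_eq_radii ⟨z, cz, hz⟩ h] at ht
    exact hst none (none_mem_of_mem_segs_radii hs) (none_mem_of_mem_segs_radii ht)
  rw [← colour_eq_of_mem_ncD hn hmem ha'D ha'.1 ha'.2, Bool.not_not]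

lemma colour_eq_not_of_forall_diam_mem_at (hD : SymClosed D) (hnot : RElt.diam a c ∉ D)
    (hcol : colourRule n D (RElt.diam a c) (RElt.diam a' c')) (hHas : HasDiam D)
    (hat : ∀ z cz, RElt.diam z cz ∈ D → z = a ∨ z = a + dN n)
    (ha' : a' ≠ a ∧ a' ≠ a + dN n) : c' = !c := by
  obtain ⟨x, cx, hx⟩ := hHas
  have haD : RElt.diam a (!c) ∈ D := colour_eq_not_of_not_mem hD hnot hx (hat x cx hx) ▸
    hD.diam_mem_of_eq_or_eq_add_dN (hat x cx hx) hx
  have hrule := (hcol a' c' rfl).2.2 a (!c) haD fun z cz hz =>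
    ⟨hat z cz hz, colour_eq_not_of_not_mem hD hnot hz (hat z cz hz)⟩
  rw [Bool.not_not] at hrule
  exact Bool.eq_not_iff.mpr fun h => ha'.1 ((hrule.1 h).resolve_right ha'.2)

end Colour

end DynkinD

open DynkinD in
/-- Mutation changes the colour of diameters: if a coloured diameter of `nc D \ D` is
mutated (by `μ_D` or `μ_D^-`) to a diameter, the result has the opposite colour. -/
theorem stmt_11 (n : ℕ) (hn : 4 ≤ n) (D : Set (RElt n))
    (hD : IsDiagram D) (hnc : NonCrossing D)
    (a a' : Vtx n) (c c' : Bool)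
    (hmem : RElt.diam a c ∈ ncD n D) (hnot : RElt.diam a c ∉ D)
    (hmut : MutStep n D (RElt.diam a c) (RElt.diam a' c') ∨
            MutStepInv n D (RElt.diam a c) (RElt.diam a' c')) :
    c' = !c := by
  have hn0 : 0 < n := by omega
  obtain ⟨hcol, s, hs, t, ht, hst⟩ := exists_disjoint_segs_of_mut hnot hmut
  have ha' : a' ≠ a ∧ a' ≠ a + dN n := not_or.mp fun h => by
    obtain ⟨x, hxs, hxt⟩ := exists_mem_segs_rD_diam_of_eq_or h hs ht
    exact hst x hxs hxt
  by_cases hHas : HasDiam D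
  · by_cases hex : ∃ z cz, RElt.diam z cz ∈ D ∧ z ≠ a ∧ z ≠ a + dN n
    · obtain ⟨z, cz, hz, hz1, hz2⟩ := hex
      exact colour_eq_not_of_diam_mem_away hn0 hD.2 hnc hmem hz hz1 hz2 ha' hs ht hst
    · push Not at hex
      exact colour_eq_not_of_forall_diam_mem_at hD.2 hnot hcol hHas
        (fun z cz hz => (eq_or_ne z a).imp_right (hex z cz hz)) ha'
  · obtain ⟨_, _, ⟨⟩, hc⟩ := (hcol a' c' rfl).1 hHas
    exact hc
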